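/- arXiv:2301.13328 — 4 statements merged into one kernel-verified Lean document; each statement's English description precedes it below -/
import Mathlib

section
/- Let f and g be Boolean functions over disjoint variable sets. Then a term t is a prime implicant of f ∧ g if and only if t = t₁ ∧ t₂ where t₁ is a prime implicant of f and t₂ is a prime implicant of g. Moreover this decomposition is unique: the map (t₁, t₂) ↦ t₁ ∧ t₂ is a bijection between IP(f) × IP(g) and IP(f ∧ g). -/
abbrev Term (V : Type*) := V → Option Bool

def Extends {V : Type*} (a : V → Bool) (t : Term V) : Prop :=
  ∀ v b, t v = some b → a v = b

def SubTerm {V : Type*} (s t : Term V) : Prop :=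
  ∀ v b, s v = some b → t v = some b

def Implicant {V : Type*} (f : (V → Bool) → Bool) (t : Term V) : Prop :=
  ∀ a, Extends a t → f a = true

def PrimeImplicant {V : Type*} (f : (V → Bool) → Bool) (t : Term V) : Prop :=
  Implicant f t ∧ ∀ s, SubTerm s t → Implicant f s → s = t

def IP {V : Type*} (f : (V → Bool) → Bool) : Set (Term V) :=
  {t | PrimeImplicant f t}

def Compatible {V : Type*} (t t' : Term V) : Prop :=
  ∀ v b b', t v = some b → t' v = some b' → b = b'

def combine {V : Type*} (t t' : Term V) : Term V :=
  fun v => (t v).orElse (fun _ => t' v)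

def maxSet {V : Type*} (S : Set (Term V)) : Set (Term V) :=
  {t ∈ S | ∀ t' ∈ S, SubTerm t' t → t' = t}

def fAnd {V : Type*} (f g : (V → Bool) → Bool) : (V → Bool) → Bool :=
  fun a => f a && g a

def restrict {V : Type*} [DecidableEq V] (f : (V → Bool) → Bool) (x : V) (b : Bool) :
    (V → Bool) → Bool :=
  fun a => f (Function.update a x b)

def SR {V : Type*} (f : (V → Bool) → Bool) (a : V → Bool) : Set (Term V) :=
  {t | PrimeImplicant f t ∧ Extends a t}

/-!
A prime implicant of a function that depends only on the variables in `s` mentions only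
variables of `s`, because its restriction to `s` is again an implicant. Hence a prime implicant
`t` of `f ∧ g` is `combine (t|X) (t|Y)`, and conversely `combine t₁ t₂`, for terms over the
disjoint sets `X` and `Y`, restricts back to `t₁` and `t₂`. Restriction to `X` is monotone and
keeps implicants of `f` implicants, so minimality passes between `t` and its two parts in both
directions.
-/

section

variable {V : Type*}

namespace Term

open Classical in
noncomputable def restrict (s : Set V) (t : Term V) : Term V :=
  fun v => if v ∈ s then t v else none

def SupportedOn (t : Term V) (s : Set V) : Prop :=
  ∀ v b, t v = some b → v ∈ s

variable {s r : Set V} {t a b : Term V}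

lemma restrict_apply_of_mem {v : V} (hv : v ∈ s) : t.restrict s v = t v := by
  simp [restrict, hv]

lemma restrict_apply_of_notMem {v : V} (hv : v ∉ s) : t.restrict s v = none := by
  simp [restrict, hv]

lemma restrict_supportedOn : (t.restrict s).SupportedOn s := by
  intro v b hv
  by_contra hvs
  simp [restrict_apply_of_notMem hvs] at hv

lemma SupportedOn.restrict_eq_self (ht : t.SupportedOn s) : t.restrict s = t := by
  funext v
  by_cases hv : v ∈ s
  · exact restrict_apply_of_mem hv
  · rw [restrict_apply_of_notMem hv]
    cases htv : t v
    · rfl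
    · exact absurd (ht v _ htv) hv

lemma SupportedOn.restrict_eq_none (ht : t.SupportedOn s) (hsr : Disjoint s r) :
    t.restrict r = fun _ => none := by
  funext v
  by_cases hv : v ∈ r
  · rw [restrict_apply_of_mem hv]
    cases htv : t v
    · rfl
    · exact absurd hv (hsr.notMem_of_mem_left (ht v _ htv))
  · exact restrict_apply_of_notMem hv

lemma SupportedOn.combine (ha : a.SupportedOn s) (hb : b.SupportedOn r) :
    (combine a b).SupportedOn (s ∪ r) := by
  intro v c hv
  cases hav : a v
  · simp only [_root_.combine, hav, Option.orElse_none] at hv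
    exact Or.inr (hb v c hv)
  · exact Or.inl (ha v _ hav)

lemma restrict_combine (s : Set V) (a b : Term V) :
    (combine a b).restrict s = combine (a.restrict s) (b.restrict s) := by
  funext v
  by_cases hv : v ∈ s <;> simp [_root_.combine, restrict, hv]

lemma combine_none_left (t : Term V) : combine (fun _ => none) t = t := rfl

lemma combine_none_right (t : Term V) : combine t (fun _ => none) = t := by
  funext v
  cases h : t v <;> simp [_root_.combine, h]

lemma restrict_combine_left (ha : a.SupportedOn s) (hb : b.SupportedOn r) (hsr : Disjoint s r) :
    (combine a b).restrict s = a := by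
  rw [restrict_combine, ha.restrict_eq_self, hb.restrict_eq_none hsr.symm, combine_none_right]

lemma restrict_combine_right (ha : a.SupportedOn s) (hb : b.SupportedOn r) (hsr : Disjoint s r) :
    (combine a b).restrict r = b := by
  rw [restrict_combine, hb.restrict_eq_self, ha.restrict_eq_none hsr, combine_none_left]

lemma subTerm_combine_left (a b : Term V) : SubTerm a (combine a b) := by
  intro v c h
  simp [_root_.combine, h]

lemma subTerm_combine_right (ha : a.SupportedOn s) (hb : b.SupportedOn r) (hsr : Disjoint s r) :
    SubTerm b (combine a b) := by
  intro v c h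
  have hv : v ∈ r := hb v c h
  rw [← restrict_combine_right ha hb hsr, restrict_apply_of_mem hv] at h
  exact h

lemma combine_inj {a' b' : Term V} (ha : a.SupportedOn s) (hb : b.SupportedOn r)
    (ha' : a'.SupportedOn s) (hb' : b'.SupportedOn r) (hsr : Disjoint s r) :
    combine a b = combine a' b' ↔ a = a' ∧ b = b' := by
  refine ⟨fun h => ⟨?_, ?_⟩, fun h => by rw [h.1, h.2]⟩
  · rw [← restrict_combine_left ha hb hsr, h, restrict_combine_left ha' hb' hsr]
  · rw [← restrict_combine_right ha hb hsr, h, restrict_combine_right ha' hb' hsr]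

lemma combine_restrict_restrict (ht : t.SupportedOn (s ∪ r)) :
    combine (t.restrict s) (t.restrict r) = t := by
  funext v
  by_cases hv : v ∈ s
  · cases htv : t v <;> simp [_root_.combine, restrict, hv, htv]
  · cases htv : t v
    · simp [_root_.combine, restrict, htv]
    · have hvr : v ∈ r := (ht v _ htv).resolve_left hv
      simp [_root_.combine, restrict, hv, hvr, htv]

end Term

open Term

variable {f g : (V → Bool) → Bool} {s r : Set V} {t u w : Term V}

lemma SubTerm.trans (htu : SubTerm t u) (huw : SubTerm u w) : SubTerm t w :=
  fun v b h => huw v b (htu v b h)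

lemma SubTerm.supportedOn (htu : SubTerm t u) (hu : u.SupportedOn s) : t.SupportedOn s :=
  fun v b h => hu v b (htu v b h)

lemma SubTerm.restrict (htu : SubTerm t u) (s : Set V) :
    SubTerm (t.restrict s) (u.restrict s) := by
  intro v b h
  by_cases hv : v ∈ s
  · rw [restrict_apply_of_mem hv] at h ⊢
    exact htu v b h
  · simp [restrict_apply_of_notMem hv] at h

lemma restrict_subTerm (s : Set V) (t : Term V) : SubTerm (t.restrict s) t := by
  intro v b h
  by_cases hv : v ∈ s
  · rwa [restrict_apply_of_mem hv] at h
  · simp [restrict_apply_of_notMem hv] at h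

lemma combine_subTerm {a b : Term V} (ha : SubTerm a t) (hb : SubTerm b t) :
    SubTerm (combine a b) t := by
  intro v c h
  cases hav : a v
  · simp only [combine, hav, Option.orElse_none] at h
    exact hb v c h
  · simp only [combine, hav, Option.orElse_some] at h
    exact ha v c (hav ▸ h)

lemma Implicant.mono (hs : Implicant f t) (htu : SubTerm t u) : Implicant f u :=
  fun a ha => hs a fun v b h => ha v b (htu v b h)

lemma implicant_fAnd_iff : Implicant (fAnd f g) t ↔ Implicant f t ∧ Implicant g t := by
  simp only [Implicant, fAnd, Bool.and_eq_true]
  exact ⟨fun h => ⟨fun a ha => (h a ha).1, fun a ha => (h a ha).2⟩,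
    fun h a ha => ⟨h.1 a ha, h.2 a ha⟩⟩

lemma DependsOn.fAnd (hf : DependsOn f s) (hg : DependsOn g r) : DependsOn (fAnd f g) (s ∪ r) :=
  fun a a' h => by
    simp only [_root_.fAnd, hf fun v hv => h v (Or.inl hv), hg fun v hv => h v (Or.inr hv)]

lemma Implicant.restrict (hf : DependsOn f s) (ht : Implicant f t) :
    Implicant f (t.restrict s) := by
  intro a ha
  let a' : V → Bool := fun v => (t v).getD (a v)
  have ha' : Extends a' t := fun v b h => by simp [a', h]
  have hagree : ∀ v ∈ s, a v = a' v := by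
    intro v hv
    cases htv : t v
    · simp [a', htv]
    · simpa [a', htv] using ha v _ (by rw [restrict_apply_of_mem hv, htv])
  rw [hf hagree, ht a' ha']

lemma PrimeImplicant.supportedOn (hf : DependsOn f s) (ht : PrimeImplicant f t) :
    t.SupportedOn s := by
  rw [← ht.2 _ (restrict_subTerm s t) (ht.1.restrict hf)]
  exact restrict_supportedOn

lemma fAnd_comm (f g : (V → Bool) → Bool) : fAnd f g = fAnd g f :=
  funext fun a => Bool.and_comm (f a) (g a)

lemma primeImplicant_restrict_of_fAnd (hf : DependsOn f s) (hg : DependsOn g r)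
    (hsr : Disjoint s r) (ht : PrimeImplicant (fAnd f g) t) : PrimeImplicant f (t.restrict s) := by
  obtain ⟨htf, htg⟩ := implicant_fAnd_iff.mp ht.1
  refine ⟨htf.restrict hf, fun w hw hwf => ?_⟩
  have hws : w.SupportedOn s := hw.supportedOn restrict_supportedOn
  have htr : (t.restrict r).SupportedOn r := restrict_supportedOn
  have hcomb : combine w (t.restrict r) = t :=
    ht.2 _ (combine_subTerm (hw.trans (restrict_subTerm s t)) (restrict_subTerm r t))
      (implicant_fAnd_iff.mpr ⟨hwf.mono (subTerm_combine_left _ _),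
        (htg.restrict hg).mono (subTerm_combine_right hws htr hsr)⟩)
  rw [← hcomb, restrict_combine_left hws htr hsr]

lemma primeImplicant_fAnd_combine (hf : DependsOn f s) (hg : DependsOn g r) (hsr : Disjoint s r)
    {t₁ t₂ : Term V} (h₁ : PrimeImplicant f t₁) (h₂ : PrimeImplicant g t₂) :
    PrimeImplicant (fAnd f g) (combine t₁ t₂) := by
  have hs₁ := h₁.supportedOn hf
  have hs₂ := h₂.supportedOn hg
  refine ⟨implicant_fAnd_iff.mpr ⟨h₁.1.mono (subTerm_combine_left _ _),
    h₂.1.mono (subTerm_combine_right hs₁ hs₂ hsr)⟩, fun w hw hwi => ?_⟩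
  obtain ⟨hwf, hwg⟩ := implicant_fAnd_iff.mp hwi
  have hw₁ : w.restrict s = t₁ := h₁.2 _
    (restrict_combine_left hs₁ hs₂ hsr ▸ hw.restrict s) (hwf.restrict hf)
  have hw₂ : w.restrict r = t₂ := h₂.2 _
    (restrict_combine_right hs₁ hs₂ hsr ▸ hw.restrict r) (hwg.restrict hg)
  rw [← combine_restrict_restrict (hw.supportedOn (hs₁.combine hs₂)), hw₁, hw₂]

end

/-- for f, g over disjoint variable sets, (t₁,t₂) ↦ t₁ ∧ t₂ is a bijection
between IP(f) × IP(g) and IP(f ∧ g). -/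
theorem stmt1 {V : Type*} (X Y : Finset V) (hXY : Disjoint X Y)
    (f g : (V → Bool) → Bool)
    (hf : ∀ a a' : V → Bool, (∀ v ∈ X, a v = a' v) → f a = f a')
    (hg : ∀ a a' : V → Bool, (∀ v ∈ Y, a v = a' v) → g a = g a') :
    (∀ t : Term V, t ∈ IP (fAnd f g) ↔ ∃ t₁ ∈ IP f, ∃ t₂ ∈ IP g, t = combine t₁ t₂) ∧
    (∀ t₁ ∈ IP f, ∀ t₁' ∈ IP f, ∀ t₂ ∈ IP g, ∀ t₂' ∈ IP g,
      combine t₁ t₂ = combine t₁' t₂' → t₁ = t₁' ∧ t₂ = t₂') := by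
  have hX : DependsOn f (X : Set V) := hf
  have hY : DependsOn g (Y : Set V) := hg
  have hXY' : Disjoint (X : Set V) Y := Finset.disjoint_coe.mpr hXY
  refine ⟨fun t => ⟨fun ht => ?_, ?_⟩, ?_⟩
  · refine ⟨_, primeImplicant_restrict_of_fAnd hX hY hXY' ht,
      _, primeImplicant_restrict_of_fAnd hY hX hXY'.symm (fAnd_comm f g ▸ ht), ?_⟩
    exact (Term.combine_restrict_restrict (ht.supportedOn (hX.fAnd hY))).symm
  · rintro ⟨t₁, h₁, t₂, h₂, rfl⟩
    exact primeImplicant_fAnd_combine hX hY hXY' h₁ h₂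
  · intro t₁ h₁ t₁' h₁' t₂ h₂ t₂' h₂'
    exact (Term.combine_inj (h₁.supportedOn hX) (h₂.supportedOn hY) (h₁'.supportedOn hX)
      (h₂'.supportedOn hY) hXY').mp
end

section
/- Deciding whether a Boolean function given as a CNF formula has an implicant t with var(t) ⊆ Y, for a given subset Y of variables, generalizes SAT: specifically, for the construction where each clause c_i is guarded by a fresh variable z_i via B^(1) defined by B^(i) = (¬z_i ∧ c_i) ∨ (z_i ∧ B^(i+1)) with B^(m+1) = 1, the function B^(1) has an implicant t with var(t) ⊆ var(φ) if and only if φ = c₁ ∧ … ∧ c_m is satisfiable. -/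
def evalClause {V : Type*} (C : V → Option Bool) (a : V → Bool) : Prop :=
  ∃ v b, C v = some b ∧ a v = b

def Bfun {V : Type*} (m : ℕ) (clauses : Fin m → V → Option Bool) (i : ℕ)
    (a : (V ⊕ Fin m) → Bool) : Prop :=
  if h : i < m then
    ((a (Sum.inr ⟨i, h⟩) = false ∧ evalClause (clauses ⟨i, h⟩) (fun v => a (Sum.inl v))) ∨
     (a (Sum.inr ⟨i, h⟩) = true ∧ Bfun m clauses (i + 1) a))
  else True
termination_by m - i

/-!
`B^(i)` is a decision list: it evaluates the clause `c_j` of the first guard `z_j` (with `j ≥ i`)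
that is false, and is true if there is none. A term over `var(φ)` leaves every guard free, so it
is an implicant of `B^(1)` exactly when each of its extensions satisfies every clause.
-/

theorem bfun_iff_forall_first_false_guard {V : Type*} {m : ℕ} (clauses : Fin m → V → Option Bool)
    (i : ℕ) (a : V ⊕ Fin m → Bool) :
    Bfun m clauses i a ↔ ∀ j : Fin m, i ≤ j → (∀ k : Fin m, i ≤ k → k < j → a (.inr k)) →
      a (.inr j) = false → evalClause (clauses j) (a ∘ .inl) := by
  rw [Bfun]
  split_ifs with hi
  · rw [bfun_iff_forall_first_false_guard clauses (i + 1) a]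
    cases hz : a (.inr ⟨i, hi⟩)
    · simp only [true_and, Bool.false_eq_true, false_and, or_false]
      constructor
      · intro hc j hij hguard hzj
        obtain rfl | hlt := eq_or_lt_of_le hij
        · exact hc
        · simpa [hz] using hguard ⟨i, hi⟩ le_rfl hlt
      · intro h
        exact h ⟨i, hi⟩ le_rfl (fun k h1 h2 => absurd h2 (not_lt.2 h1)) hz
    · simp only [Bool.true_eq_false, false_and, true_and, false_or]
      constructor
      · intro h j hij hguard hzj
        obtain rfl | hlt := eq_or_lt_of_le hij
        · simp [hz] at hzj
        · exact h j hlt (fun k h1 h2 => hguard k (by omega) h2) hzj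
      · intro h j hij hguard hzj
        refine h j (by omega) (fun k h1 h2 => ?_) hzj
        obtain rfl | hlt := eq_or_lt_of_le h1
        · exact hz
        · exact hguard k hlt h2
  · simp only [true_iff]
    intro j hij
    exact absurd (lt_of_le_of_lt hij j.2) hi
termination_by m - i

/-- B^(1) has an implicant over var(φ) iff the CNF φ is satisfiable. -/
theorem stmt10 {V : Type*} (m : ℕ) (clauses : Fin m → V → Option Bool) :
    (∃ t : (V ⊕ Fin m) → Option Bool,
      (∀ w, t w ≠ none → ∃ v, w = Sum.inl v) ∧
      (∀ a : (V ⊕ Fin m) → Bool, (∀ w b, t w = some b → a w = b) →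
        Bfun m clauses 0 a)) ↔
    (∃ a : V → Bool, ∀ i, evalClause (clauses i) a) := by
  constructor
  · rintro ⟨t, ht_vars, ht_imp⟩
    have ht_inr (k : Fin m) : t (.inr k) = none := by
      by_contra h
      simpa using ht_vars _ h
    refine ⟨fun v => (t (.inl v)).getD false, fun j => ?_⟩
    -- Guards `z_k` true for `k ≠ j` and `z_j` false make `B^(1)` evaluate to `c_j`.
    let a : V ⊕ Fin m → Bool := Sum.elim (fun v => (t (.inl v)).getD false) (· ≠ j)
    have ha : ∀ w b, t w = some b → a w = b := by
      rintro (v | k) b hw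
      · simp [a, hw]
      · simp [ht_inr] at hw
    refine (bfun_iff_forall_first_false_guard clauses 0 a).1 (ht_imp a ha) j (Nat.zero_le _)
      (fun k _ hk => ?_) (by simp [a])
    simpa [a] using hk.ne
  · rintro ⟨a, ha⟩
    refine ⟨Sum.elim (some ∘ a) fun _ => none, by simp, fun a' ha' => ?_⟩
    have : a' ∘ .inl = a := funext fun v => ha' (.inl v) (a v) rfl
    exact (bfun_iff_forall_first_false_guard clauses 0 a').2 fun j _ _ _ => this ▸ ha j
end

section
/- With f as above (satisfying assignments exactly {a_E : E ∈ H}), the prime implicants of ¬f that consist only of positive literals are exactly the terms ⋀_{i∈T} x_i for T a minimal transversal of H. Consequently, the sufficient reasons for the all-ones assignment a_∅ given ¬f are in bijection with the minimal transversals of H. -/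
section PositiveTerms

variable {V : Type*}

def IsPositive (t : Term V) : Prop := ∀ v b, t v = some b → b = true

theorem IsPositive.of_subTerm {s t : Term V} (ht : IsPositive t) (hst : SubTerm s t) :
    IsPositive s :=
  fun v b h => ht v b (hst v b h)

theorem extends_const_true_iff {t : Term V} : Extends (fun _ => true) t ↔ IsPositive t :=
  forall₂_congr fun _ _ => imp_congr_right fun _ => eq_comm

variable [DecidableEq V]

def posTerm (T : Finset V) : Term V := fun i => if i ∈ T then some true else none

def IsTransversal (Hs : Set (Finset V)) (T : Finset V) : Prop := ∀ E ∈ Hs, ∃ i ∈ T, i ∈ E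

def IsMinimalTransversal (Hs : Set (Finset V)) (T : Finset V) : Prop :=
  IsTransversal Hs T ∧ ∀ T' ⊆ T, IsTransversal Hs T' → T' = T

@[simp]
theorem posTerm_eq_some_iff {T : Finset V} {i : V} {b : Bool} :
    posTerm T i = some b ↔ i ∈ T ∧ b = true := by
  unfold posTerm
  split_ifs with h <;> simp [h, eq_comm]

theorem isPositive_posTerm (T : Finset V) : IsPositive (posTerm T) := by
  intro v b h
  exact (posTerm_eq_some_iff.1 h).2

theorem subTerm_posTerm_iff {S T : Finset V} : SubTerm (posTerm S) (posTerm T) ↔ S ⊆ T := by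
  constructor
  · intro h i hi
    exact (posTerm_eq_some_iff.1 (h i true (posTerm_eq_some_iff.2 ⟨hi, rfl⟩))).1
  · intro h v b hv
    rw [posTerm_eq_some_iff] at hv ⊢
    exact ⟨h hv.1, hv.2⟩

theorem posTerm_injective : Function.Injective (posTerm : Finset V → Term V) := by
  intro S T h
  refine subset_antisymm (subTerm_posTerm_iff.1 ?_) (subTerm_posTerm_iff.1 ?_) <;>
    intro v b hv <;> simpa [h] using hv

theorem IsPositive.eq_posTerm [Fintype V] {t : Term V} (ht : IsPositive t) :
    t = posTerm {i | t i = some true} := by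
  funext i
  match hti : t i with
  | none => simp [posTerm, hti]
  | some b => obtain rfl := ht i b hti; simp [posTerm, hti]

theorem extends_posTerm_iff {a : V → Bool} {T : Finset V} :
    Extends a (posTerm T) ↔ ∀ i ∈ T, a i = true := by
  simp [Extends]

end PositiveTerms

section Hypergraph

variable {V : Type*} [DecidableEq V] {Hs : Set (Finset V)} {f : (V → Bool) → Bool}

theorem implicant_not_posTerm_iff
    (hf : ∀ a, f a = true ↔ ∃ E ∈ Hs, a = fun i => decide (i ∉ E)) {T : Finset V} :
    Implicant (fun a => !f a) (posTerm T) ↔ IsTransversal Hs T := by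
  simp only [Implicant, extends_posTerm_iff, Bool.not_eq_true', Bool.eq_false_iff, ne_eq, hf]
  constructor
  · intro h E hE
    by_contra! hmiss
    exact h (fun i => decide (i ∉ E)) (fun i hi => by simpa using hmiss i hi) ⟨E, hE, rfl⟩
  · rintro h a ha ⟨E, hE, rfl⟩
    obtain ⟨i, hiT, hiE⟩ := h E hE
    simpa [hiE] using ha i hiT

theorem primeImplicant_not_posTerm_iff [Fintype V]
    (hf : ∀ a, f a = true ↔ ∃ E ∈ Hs, a = fun i => decide (i ∉ E)) {T : Finset V} :
    PrimeImplicant (fun a => !f a) (posTerm T) ↔ IsMinimalTransversal Hs T := by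
  rw [PrimeImplicant, IsMinimalTransversal, implicant_not_posTerm_iff hf]
  refine and_congr_right fun _ => ⟨fun hprime T' hT' htrans => ?_, fun hmin s hs himp => ?_⟩
  · exact posTerm_injective <|
      hprime _ (subTerm_posTerm_iff.2 hT') ((implicant_not_posTerm_iff hf).2 htrans)
  · obtain ⟨S, rfl⟩ : ∃ S, s = posTerm S :=
      ⟨_, ((isPositive_posTerm T).of_subTerm hs).eq_posTerm⟩
    rw [hmin S (subTerm_posTerm_iff.1 hs) ((implicant_not_posTerm_iff hf).1 himp)]

theorem positive_primeImplicant_not_iff [Fintype V]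
    (hf : ∀ a, f a = true ↔ ∃ E ∈ Hs, a = fun i => decide (i ∉ E)) (t : Term V) :
    PrimeImplicant (fun a => !f a) t ∧ IsPositive t ↔
      ∃ T, IsMinimalTransversal Hs T ∧ t = posTerm T := by
  constructor
  · rintro ⟨hprime, hpos⟩
    rw [hpos.eq_posTerm] at hprime ⊢
    exact ⟨_, (primeImplicant_not_posTerm_iff hf).1 hprime, rfl⟩
  · rintro ⟨T, hT, rfl⟩
    exact ⟨(primeImplicant_not_posTerm_iff hf).2 hT, isPositive_posTerm T⟩

end Hypergraph

theorem stmt14_general (n : ℕ) (Hs : Set (Finset (Fin n)))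
    (f : (Fin n → Bool) → Bool)
    (hf : ∀ a, f a = true ↔ ∃ E ∈ Hs, a = fun i => decide (i ∉ E)) :
    (∀ t : Term (Fin n),
      ((PrimeImplicant (fun a => !f a) t ∧ ∀ v b, t v = some b → b = true) ↔
        ∃ T : Finset (Fin n),
          ((∀ E ∈ Hs, ∃ i ∈ T, i ∈ E) ∧
            ∀ T' ⊆ T, (∀ E ∈ Hs, ∃ i ∈ T', i ∈ E) → T' = T) ∧
          t = fun i => if i ∈ T then some true else none)) ∧
    SR (fun a => !f a) (fun _ => true) =
      {t | ∃ T : Finset (Fin n),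
        ((∀ E ∈ Hs, ∃ i ∈ T, i ∈ E) ∧
          ∀ T' ⊆ T, (∀ E ∈ Hs, ∃ i ∈ T', i ∈ E) → T' = T) ∧
        t = fun i => if i ∈ T then some true else none} := by
  refine ⟨positive_primeImplicant_not_iff hf, Set.ext fun t => ?_⟩
  exact (and_congr_right' extends_const_true_iff).trans (positive_primeImplicant_not_iff hf t)

/-- prime implicants of ¬f consisting only of positive literals are exactly
the terms ⋀_{i∈T} x_i for T a minimal transversal; hence SR(¬f, a_∅) corresponds to the
minimal transversals. -/
theorem stmt14 (n : ℕ) (Hs : Set (Finset (Fin n))) (hne : ∀ E ∈ Hs, E.Nonempty)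
    (f : (Fin n → Bool) → Bool)
    (hf : ∀ a, f a = true ↔ ∃ E ∈ Hs, a = fun i => decide (i ∉ E)) :
    (∀ t : Term (Fin n),
      ((PrimeImplicant (fun a => !f a) t ∧ ∀ v b, t v = some b → b = true) ↔
        ∃ T : Finset (Fin n),
          ((∀ E ∈ Hs, ∃ i ∈ T, i ∈ E) ∧
            ∀ T' ⊆ T, (∀ E ∈ Hs, ∃ i ∈ T', i ∈ E) → T' = T) ∧
          t = fun i => if i ∈ T then some true else none)) ∧
    SR (fun a => !f a) (fun _ => true) =
      {t | ∃ T : Finset (Fin n),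
        ((∀ E ∈ Hs, ∃ i ∈ T, i ∈ E) ∧
          ∀ T' ⊆ T, (∀ E ∈ Hs, ∃ i ∈ T', i ∈ E) → T' = T) ∧
        t = fun i => if i ∈ T then some true else none} :=
  stmt14_general n Hs f hf
end

section
/- Let f and g be Boolean functions over disjoint variable sets. If t₁, t₁' are prime implicants of f and t₂, t₂' are prime implicants of g such that t₁ ∧ t₂ entails t₁' ∧ t₂', then t₁ = t₁' and t₂ = t₂'. In other words, among products of prime implicants taken from disjoint-variable factors, no product strictly entails another. -/
def SupportedIn {V : Type*} (t : Term V) (X : Set V) : Prop :=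
  ∀ v ∉ X, t v = none

section

variable {V : Type*}

theorem combine_apply_of_eq_some {t t' : Term V} {v : V} {b : Bool} (h : t v = some b) :
    combine t t' v = some b := by
  simp [combine, h]

theorem combine_apply_of_eq_none {t t' : Term V} {v : V} (h : t v = none) :
    combine t t' v = t' v := by
  simp [combine, h]

theorem subTerm_update_none [DecidableEq V] (t : Term V) (v : V) :
    SubTerm (Function.update t v none) t := by
  intro w b h
  by_cases hw : w = v
  · subst hw
    simp at h
  · rwa [Function.update_of_ne hw] at h

theorem Implicant.update_none [DecidableEq V] {f : (V → Bool) → Bool} {X : Set V}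
    (hf : ∀ a a' : V → Bool, (∀ v ∈ X, a v = a' v) → f a = f a')
    {t : Term V} (ht : Implicant f t) {v : V} (hv : v ∉ X) :
    Implicant f (Function.update t v none) := by
  intro a ha
  -- `a'` extends `t` and agrees with `a` at every variable of `X`, where the literals of `t` survive
  let a' : V → Bool := fun w => (t w).getD (a w)
  have ha' : Extends a' t := fun w b hw => by simp [a', hw]
  rw [← ht a' ha']
  refine hf _ _ fun w hw => ?_
  have hwv : w ≠ v := fun h => hv (h ▸ hw)
  cases htw : t w with
  | none => simp [a', htw]
  | some b => simp [a', htw, ha w b (by rwa [Function.update_of_ne hwv])]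

theorem PrimeImplicant.supportedIn {f : (V → Bool) → Bool} {X : Set V}
    (hf : ∀ a a' : V → Bool, (∀ v ∈ X, a v = a' v) → f a = f a')
    {t : Term V} (ht : PrimeImplicant f t) : SupportedIn t X := by
  classical
  intro v hv
  have h := ht.2 _ (subTerm_update_none t v) (ht.1.update_none hf hv)
  simpa using (congrFun h v).symm

theorem PrimeImplicant.eq_of_subTerm {f : (V → Bool) → Bool} {s t : Term V}
    (hs : PrimeImplicant f s) (ht : PrimeImplicant f t) (hst : SubTerm s t) : s = t :=
  ht.2 s hst hs.1

variable {X Y : Set V} {t₁ t₁' t₂ t₂' : Term V}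

theorem SubTerm.left_of_combine (hXY : Disjoint X Y) (h₁' : SupportedIn t₁' X)
    (h₂ : SupportedIn t₂ Y) (h : SubTerm (combine t₁' t₂') (combine t₁ t₂)) :
    SubTerm t₁' t₁ := by
  intro v b hv
  have hcomb := h v b (combine_apply_of_eq_some hv)
  have hvX : v ∈ X := by
    by_contra hvX
    simp [h₁' v hvX] at hv
  cases ht₁ : t₁ v with
  | some b' => rwa [combine_apply_of_eq_some ht₁] at hcomb
  | none =>
    rw [combine_apply_of_eq_none ht₁, h₂ v (Set.disjoint_left.mp hXY hvX)] at hcomb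
    cases hcomb

theorem SubTerm.right_of_combine (hXY : Disjoint X Y) (h₁ : SupportedIn t₁ X)
    (h₁' : SupportedIn t₁' X) (h₂' : SupportedIn t₂' Y)
    (h : SubTerm (combine t₁' t₂') (combine t₁ t₂)) : SubTerm t₂' t₂ := by
  intro v b hv
  have hvX : v ∉ X := by
    by_contra hvX
    simp [h₂' v (Set.disjoint_left.mp hXY hvX)] at hv
  have hcomb := h v b (by rwa [combine_apply_of_eq_none (h₁' v hvX)])
  rwa [combine_apply_of_eq_none (h₁ v hvX)] at hcomb

end

/-- among products of prime implicants of disjoint-variable factors,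
entailment forces equality componentwise. -/
theorem stmt17 {V : Type*} (X Y : Finset V) (hXY : Disjoint X Y)
    (f g : (V → Bool) → Bool)
    (hf : ∀ a a' : V → Bool, (∀ v ∈ X, a v = a' v) → f a = f a')
    (hg : ∀ a a' : V → Bool, (∀ v ∈ Y, a v = a' v) → g a = g a')
    (t₁ t₁' t₂ t₂' : Term V)
    (h1 : t₁ ∈ IP f) (h1' : t₁' ∈ IP f) (h2 : t₂ ∈ IP g) (h2' : t₂' ∈ IP g)
    (hent : SubTerm (combine t₁' t₂') (combine t₁ t₂)) :
    t₁ = t₁' ∧ t₂ = t₂' := by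
  have hXY' : Disjoint (X : Set V) Y := Finset.disjoint_coe.mpr hXY
  have s₁ : SupportedIn t₁ X := PrimeImplicant.supportedIn hf h1
  have s₁' : SupportedIn t₁' X := PrimeImplicant.supportedIn hf h1'
  have s₂ : SupportedIn t₂ Y := PrimeImplicant.supportedIn hg h2
  have s₂' : SupportedIn t₂' Y := PrimeImplicant.supportedIn hg h2'
  exact ⟨(PrimeImplicant.eq_of_subTerm h1' h1 (hent.left_of_combine hXY' s₁' s₂)).symm,
    (PrimeImplicant.eq_of_subTerm h2' h2 (hent.right_of_combine hXY' s₁ s₁' s₂')).symm⟩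
end
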